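/- Let k ∈ ℝ, let w_A, w_B : ℝ → ℂ be C^∞ functions with w_A(x) + w_B(x) = x + k, let s_A, s_B be antiderivatives with s_A(x) + s_B(x) = x²/2 + kx, let N_φ·conj(N_Ψ) = e^{−k²/2}/√(2π), let φ_n, Ψ_n, ρ_A, ρ_B be as in the pseudo-bosonic construction, and let E = {h ∈ L²(ℝ) : h·ρ_A ∈ L², h·ρ_B ∈ L²}. If f ∈ E satisfies ⟨f, φ_n⟩ = 0 for all n ≥ 0, then f = 0 almost everywhere in ℝ; likewise, if ⟨f, Ψ_n⟩ = 0 for all n ≥ 0, then f = 0 almost everywhere. That is, both families F_φ = {φ_n} and F_Ψ = {Ψ_n} are complete in E. -/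

import Mathlib

open MeasureTheory

noncomputable section

/-- The `n`-th physicists' Hermite polynomial, `H_n(y) = 2^{n/2} He_n(√2 y)`. -/
def physHermite (n : ℕ) (y : ℝ) : ℝ :=
  (Real.sqrt 2) ^ n * Polynomial.aeval (Real.sqrt 2 * y) (Polynomial.hermite n)

/-- `φ_n(x) = (N_φ/√(2ⁿ n!)) H_n((x+k)/√2) e^{-s_A(x)}`. -/
def pbPhiExpl (k : ℝ) (sA : ℝ → ℂ) (Nφ : ℂ) (n : ℕ) (x : ℝ) : ℂ :=
  Nφ / (Real.sqrt ((2 : ℝ) ^ n * n.factorial) : ℂ) *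
    (physHermite n ((x + k) / Real.sqrt 2) : ℝ) * Complex.exp (-sA x)

/-- `Ψ_n(x) = (N_Ψ/√(2ⁿ n!)) H_n((x+k)/√2) e^{-conj s_B(x)}`. -/
def pbPsiExpl (k : ℝ) (sB : ℝ → ℂ) (NΨ : ℂ) (n : ℕ) (x : ℝ) : ℂ :=
  NΨ / (Real.sqrt ((2 : ℝ) ^ n * n.factorial) : ℂ) *
    (physHermite n ((x + k) / Real.sqrt 2) : ℝ) *
    Complex.exp (-(starRingEnd ℂ) (sB x))

/-- `ρ_A(x) = N_φ (2π)^{1/4} e^{(x+k)²/4} e^{-s_A(x)}`. -/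
def rhoA (k : ℝ) (sA : ℝ → ℂ) (Nφ : ℂ) (x : ℝ) : ℂ :=
  Nφ * ((2 * Real.pi) ^ ((1 : ℝ) / 4) : ℝ) *
    Complex.exp (((x : ℂ) + (k : ℂ)) ^ 2 / 4) * Complex.exp (-sA x)

/-- `ρ_B(x) = N_Ψ (2π)^{1/4} e^{(x+k)²/4} e^{-conj s_B(x)}`. -/
def rhoB (k : ℝ) (sB : ℝ → ℂ) (NΨ : ℂ) (x : ℝ) : ℂ :=
  NΨ * ((2 * Real.pi) ^ ((1 : ℝ) / 4) : ℝ) *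
    Complex.exp (((x : ℂ) + (k : ℂ)) ^ 2 / 4) *
    Complex.exp (-(starRingEnd ℂ) (sB x))

open scoped ContDiff FourierTransform


lemma int_exp_quad {a : ℝ} (b : ℝ) (ha : a < 0) :
    Integrable (fun x : ℝ => Real.exp (a * x ^ 2 + b * x)) := by
  have hane : a ≠ 0 := ha.ne
  have h0 : (0 : ℝ) < -a := by linarith
  have base : Integrable (fun x : ℝ => Real.exp (-(-a) * x ^ 2)) :=
    integrable_exp_neg_mul_sq h0
  have hshift := base.comp_sub_right (-(b / (2 * a)))
  have heq : (fun x : ℝ => Real.exp (a * x ^ 2 + b * x))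
      = fun x : ℝ => Real.exp (-(b ^ 2 / (4 * a))) *
        Real.exp (-(-a) * (x - -(b / (2 * a))) ^ 2) := by
    funext x
    rw [← Real.exp_add]
    congr 1
    field_simp
    ring
  rw [heq]
  exact hshift.const_mul _

lemma int_exp_quad_abs {a : ℝ} (b : ℝ) (ha : a < 0) :
    Integrable (fun x : ℝ => Real.exp (a * x ^ 2 + b * |x|)) := by
  have h1 := int_exp_quad b ha
  have h2 := int_exp_quad (-b) ha
  refine (h1.add h2).mono' ?_ ?_
  · exact (Real.continuous_exp.comp (by continuity)).aestronglyMeasurable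
  · filter_upwards with x
    rw [Real.norm_eq_abs, Real.abs_exp]
    rcases abs_cases x with ⟨hx, _⟩ | ⟨hx, _⟩
    · rw [hx]
      exact le_add_of_nonneg_right (Real.exp_nonneg _)
    · rw [hx]
      have : -b * x = b * -x := by ring
      rw [← this] at *
      exact le_add_of_nonneg_left (Real.exp_nonneg _)

lemma pow_le_factorial_mul_exp (t : ℝ) (ht : 0 ≤ t) (n : ℕ) :
    t ^ n ≤ n.factorial * Real.exp t := by
  have h1 : t ^ n / n.factorial ≤ Real.exp t :=
    le_trans (Finset.single_le_sum (f := fun i => t ^ i / i.factorial)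
      (fun i _ => by positivity) (Finset.self_mem_range_succ n))
      (Real.sum_le_exp_of_nonneg ht (n + 1))
  have h2 : (0 : ℝ) < n.factorial := by positivity
  calc t ^ n = t ^ n / n.factorial * n.factorial := by field_simp
  _ ≤ Real.exp t * n.factorial := mul_le_mul_of_nonneg_right h1 h2.le
  _ = n.factorial * Real.exp t := mul_comm _ _


lemma memL2_weight (k : ℝ) {a : ℝ} (b : ℝ) (ha : a < 1 / 4) :
    MemLp (fun x : ℝ => Real.exp (a * x ^ 2 + b * |x| - (x + k) ^ 2 / 4)) 2
      (volume : Measure ℝ) := by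
  have hcont : Continuous fun x : ℝ => Real.exp (a * x ^ 2 + b * |x| - (x + k) ^ 2 / 4) :=
    Real.continuous_exp.comp (by continuity)
  rw [memLp_two_iff_integrable_sq hcont.aestronglyMeasurable]
  refine (int_exp_quad_abs (2 * b + |k|) (by linarith : 2 * a - 1 / 2 < 0)).mono'
    ((hcont.pow 2).aestronglyMeasurable) ?_
  filter_upwards with x
  rw [Real.norm_eq_abs, abs_of_nonneg (by positivity)]
  rw [← Real.exp_nat_mul]
  apply Real.exp_le_exp.2
  have h1 : -(|k| * |x|) ≤ k * x := by
    rw [← abs_mul]; exact neg_abs_le _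
  nlinarith [sq_nonneg k]

lemma int_mul_weight (k : ℝ) {g : ℝ → ℂ} (hg : MemLp g 2 (volume : Measure ℝ))
    {a : ℝ} (b : ℝ) (ha : a < 1 / 4) :
    Integrable (fun x : ℝ => ‖g x‖ * Real.exp (a * x ^ 2 + b * |x| - (x + k) ^ 2 / 4)) := by
  have hs : MemLp ((fun x : ℝ => Real.exp (a * x ^ 2 + b * |x| - (x + k) ^ 2 / 4)) • g) 1
      (volume : Measure ℝ) :=
    hg.smul (memL2_weight k b ha)
  have := (memLp_one_iff_integrable.mp hs).norm
  refine this.congr ?_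
  filter_upwards with x
  simp only [Pi.smul_apply', Pi.smul_apply, norm_smul, Real.norm_eq_abs,
    abs_of_nonneg (Real.exp_nonneg _)]
  ring


lemma moments_zero (k : ℝ) (g : ℝ → ℂ) (hg : MemLp g 2 (volume : Measure ℝ))
    (h : ∀ n : ℕ, (∫ x : ℝ, g x * ((physHermite n ((x + k) / Real.sqrt 2) : ℝ) : ℂ) *
        Complex.exp (-((x : ℂ) + (k : ℂ)) ^ 2 / 4)) = 0)
    (momInt : ∀ n : ℕ, Integrable (fun x : ℝ =>
      g x * (x : ℂ) ^ n * ((Real.exp (-(x + k) ^ 2 / 4) : ℝ) : ℂ))) :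
    ∀ n : ℕ, (∫ x : ℝ, g x * (x : ℂ) ^ n * ((Real.exp (-(x + k) ^ 2 / 4) : ℝ) : ℂ)) = 0 := by
  have hEc : ∀ x : ℝ, Complex.exp (-((x : ℂ) + (k : ℂ)) ^ 2 / 4)
      = ((Real.exp (-(x + k) ^ 2 / 4) : ℝ) : ℂ) := by
    intro x
    rw [Complex.ofReal_exp]
    congr 1
    push_cast
    ring
  set P : ℕ → Polynomial ℝ := fun m =>
    ((Polynomial.hermite m).map (Int.castRingHom ℝ)).comp (Polynomial.X + Polynomial.C k)
    with hPdef
  have hPd : ∀ m, (P m).natDegree = m := by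
    intro m
    rw [hPdef]
    simp only
    rw [Polynomial.natDegree_comp,
      Polynomial.natDegree_map_eq_of_injective Int.cast_injective,
      Polynomial.natDegree_X_add_C, mul_one]
    exact Polynomial.natDegree_hermite
  have hPm : ∀ m, (P m).Monic := fun m =>
    ((Polynomial.hermite_monic m).map (Int.castRingHom ℝ)).comp_X_add_C k
  have hPL : ∀ m, (P m).coeff m = 1 := by
    intro m
    have := (hPm m).leadingCoeff
    rwa [Polynomial.leadingCoeff, hPd m] at this
  have hPeval : ∀ m (x : ℝ), ((physHermite m ((x + k) / Real.sqrt 2) : ℝ) : ℂ)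
      = ((Real.sqrt 2 ^ m : ℝ) : ℂ) * (((P m).eval x : ℝ) : ℂ) := by
    intro m x
    have h2 : Real.sqrt 2 ≠ 0 := by positivity
    have harg : Real.sqrt 2 * ((x + k) / Real.sqrt 2) = x + k := by
      rw [mul_div_assoc']
      exact mul_div_cancel_left₀ _ h2
    have : (P m).eval x = Polynomial.aeval (x + k) (Polynomial.hermite m) := by
      rw [hPdef]
      simp only
      rw [Polynomial.eval_comp, Polynomial.aeval_def, Polynomial.eval_map, algebraMap_int_eq]
      simp
    rw [this]
    unfold physHermite
    rw [harg]
    push_cast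
    ring
  -- hypothesis in polynomial form
  have hP0 : ∀ m, (∫ x : ℝ, g x * (((P m).eval x : ℝ) : ℂ)
      * ((Real.exp (-(x + k) ^ 2 / 4) : ℝ) : ℂ)) = 0 := by
    intro m
    have h2 : ((Real.sqrt 2 ^ m : ℝ) : ℂ) ≠ 0 := by
      have : Real.sqrt 2 ≠ 0 := by positivity
      exact_mod_cast pow_ne_zero m this
    have heq : (∫ x : ℝ, g x * ((physHermite m ((x + k) / Real.sqrt 2) : ℝ) : ℂ) *
        Complex.exp (-((x : ℂ) + (k : ℂ)) ^ 2 / 4))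
        = ((Real.sqrt 2 ^ m : ℝ) : ℂ) * (∫ x : ℝ, g x * (((P m).eval x : ℝ) : ℂ)
          * ((Real.exp (-(x + k) ^ 2 / 4) : ℝ) : ℂ)) := by
      rw [← integral_const_mul]
      apply integral_congr_ae
      filter_upwards with x
      rw [hEc x, hPeval m x]
      ring
    have := h m
    rw [heq] at this
    exact (mul_eq_zero.mp this).resolve_left h2
  intro n
  induction n using Nat.strong_induction_on with
  | _ n ih =>
    have hrep : ∀ x : ℝ, g x * (((P n).eval x : ℝ) : ℂ) * ((Real.exp (-(x + k) ^ 2 / 4) : ℝ) : ℂ)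
        = ∑ i ∈ Finset.range (n + 1), (((P n).coeff i : ℝ) : ℂ) *
          (g x * (x : ℂ) ^ i * ((Real.exp (-(x + k) ^ 2 / 4) : ℝ) : ℂ)) := by
      intro x
      have : (P n).eval x = ∑ i ∈ Finset.range (n + 1), (P n).coeff i * x ^ i := by
        conv_lhs => rw [Polynomial.eval_eq_sum_range' (by rw [hPd n]; exact Nat.lt_succ_self n)]
      rw [this]
      push_cast
      rw [Finset.mul_sum, Finset.sum_mul]
      apply Finset.sum_congr rfl
      intro i _
      ring
    have hsum : (∑ i ∈ Finset.range (n + 1), (((P n).coeff i : ℝ) : ℂ) *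
        ∫ x : ℝ, g x * (x : ℂ) ^ i * ((Real.exp (-(x + k) ^ 2 / 4) : ℝ) : ℂ)) = 0 := by
      rw [← hP0 n]
      rw [MeasureTheory.integral_congr_ae (Filter.Eventually.of_forall hrep)]
      rw [integral_finset_sum _ (fun i _ => (momInt i).const_mul _)]
      apply Finset.sum_congr rfl
      intro i _
      rw [integral_const_mul]
    rw [Finset.sum_range_succ, hPL n] at hsum
    have hzero : (∑ i ∈ Finset.range n, (((P n).coeff i : ℝ) : ℂ) *
        ∫ x : ℝ, g x * (x : ℂ) ^ i * ((Real.exp (-(x + k) ^ 2 / 4) : ℝ) : ℂ)) = 0 := by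
      apply Finset.sum_eq_zero
      intro i hi
      rw [ih i (Finset.mem_range.mp hi), mul_zero]
    rw [hzero, zero_add] at hsum
    simpa using hsum


lemma momInt (k : ℝ) (g : ℝ → ℂ) (hg : MemLp g 2 (volume : Measure ℝ)) (n : ℕ) : Integrable (fun x : ℝ =>
    g x * (x : ℂ) ^ n * ((Real.exp (-(x + k) ^ 2 / 4) : ℝ) : ℂ)) := by
  refine ((int_mul_weight k hg (a := 0) 1 (by norm_num)).const_mul
    (n.factorial : ℝ)).mono' ?_ ?_
  · exact (hg.aestronglyMeasurable.mul
      (Complex.continuous_ofReal.pow n).aestronglyMeasurable).mul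
      (Complex.continuous_ofReal.comp (by continuity)).aestronglyMeasurable
  · filter_upwards with x
    have hx : ‖g x * (x : ℂ) ^ n * ((Real.exp (-(x + k) ^ 2 / 4) : ℝ) : ℂ)‖
        = ‖g x‖ * |x| ^ n * Real.exp (-(x + k) ^ 2 / 4) := by
      simp [norm_mul, norm_pow, Complex.norm_real, Real.abs_exp, -Complex.ofReal_exp]
    rw [hx]
    have hsplit : Real.exp ((0:ℝ) * x ^ 2 + 1 * |x| - (x + k) ^ 2 / 4)
        = Real.exp |x| * Real.exp (-(x + k) ^ 2 / 4) := by
      rw [← Real.exp_add]; ring_nf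
    have h1 : |x| ^ n ≤ n.factorial * Real.exp |x| :=
      pow_le_factorial_mul_exp |x| (abs_nonneg x) n
    calc ‖g x‖ * |x| ^ n * Real.exp (-(x + k) ^ 2 / 4)
        ≤ ‖g x‖ * (n.factorial * Real.exp |x|) * Real.exp (-(x + k) ^ 2 / 4) := by
          apply mul_le_mul_of_nonneg_right _ (Real.exp_nonneg _)
          exact mul_le_mul_of_nonneg_left h1 (norm_nonneg _)
      _ = (n.factorial : ℝ) * (‖g x‖ * Real.exp ((0:ℝ) * x ^ 2 + 1 * |x| - (x + k) ^ 2 / 4)) := by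
          rw [hsplit]; ring



lemma myFourierZero (k : ℝ) (g : ℝ → ℂ) (hg : MemLp g 2 (volume : Measure ℝ))
    (mom : ∀ n : ℕ, (∫ x : ℝ, g x * (x : ℂ) ^ n * ((Real.exp (-(x + k) ^ 2 / 4) : ℝ) : ℂ)) = 0)
    (c : ℝ) :
    (∫ x : ℝ, g x * ((Real.exp (-(x + k) ^ 2 / 4) : ℝ) : ℂ)
      * Complex.exp ((c : ℂ) * Complex.I * (x : ℂ))) = 0 := by
  set F : ℕ → ℝ → ℂ := fun m x =>
    g x * ((Real.exp (-(x + k) ^ 2 / 4) : ℝ) : ℂ) *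
      (((c : ℂ) * Complex.I * (x : ℂ)) ^ m / (m.factorial : ℂ)) with hF
  have hFnorm : ∀ (m : ℕ) (x : ℝ), ‖F m x‖
      = ‖g x‖ * Real.exp (-(x + k) ^ 2 / 4) * ((|c| * |x|) ^ m / (m.factorial : ℝ)) := by
    intro m x
    rw [hF]
    simp only [norm_mul, norm_div, norm_pow, Complex.norm_real, Real.norm_eq_abs,
      Real.abs_exp, Complex.norm_natCast, Complex.norm_I]
    ring
  have hWsplit : ∀ x : ℝ, Real.exp ((0:ℝ) * x ^ 2 + |c| * |x| - (x + k) ^ 2 / 4)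
      = Real.exp (-(x + k) ^ 2 / 4) * Real.exp (|c| * |x|) := by
    intro x; rw [← Real.exp_add]; ring_nf
  have hbound : ∀ (m : ℕ) (x : ℝ),
      ‖F m x‖ ≤ ‖g x‖ * Real.exp (-(x + k) ^ 2 / 4) * ((|c| * |x|) ^ m / (m.factorial : ℝ)) :=
    fun m x => le_of_eq (hFnorm m x)
  have hexp_bound : ∀ (m : ℕ) (x : ℝ),
      (|c| * |x|) ^ m / (m.factorial : ℝ) ≤ Real.exp (|c| * |x|) := by
    intro m x
    rw [div_le_iff₀ (by positivity)]
    calc (|c| * |x|) ^ m ≤ m.factorial * Real.exp (|c| * |x|) :=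
          pow_le_factorial_mul_exp _ (by positivity) m
      _ = Real.exp (|c| * |x|) * m.factorial := mul_comm _ _
  have hFint : ∀ m : ℕ, Integrable (F m) := by
    intro m
    refine (int_mul_weight k hg (a := 0) |c| (by norm_num)).mono' ?_ ?_
    · exact (hg.aestronglyMeasurable.mul
        (Complex.continuous_ofReal.comp (by continuity)).aestronglyMeasurable).mul
        (Continuous.aestronglyMeasurable (by continuity))
    · filter_upwards with x
      rw [hFnorm m x]
      rw [hWsplit x]
      calc ‖g x‖ * Real.exp (-(x + k) ^ 2 / 4) * ((|c| * |x|) ^ m / (m.factorial : ℝ))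
          ≤ ‖g x‖ * Real.exp (-(x + k) ^ 2 / 4) * Real.exp (|c| * |x|) :=
            mul_le_mul_of_nonneg_left (hexp_bound m x) (by positivity)
        _ = ‖g x‖ * (Real.exp (-(x + k) ^ 2 / 4) * Real.exp (|c| * |x|)) := by ring
  have hFsummable : Summable fun m : ℕ => ∫ x : ℝ, ‖F m x‖ := by
    apply summable_of_sum_range_le
      (c := ∫ x : ℝ, ‖g x‖ * Real.exp ((0:ℝ) * x ^ 2 + |c| * |x| - (x + k) ^ 2 / 4))
      (fun m => integral_nonneg fun x => norm_nonneg _)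
    intro N
    rw [← integral_finset_sum _ (fun i _ => (hFint i).norm)]
    apply integral_mono (integrable_finset_sum _ fun i _ => (hFint i).norm)
      (int_mul_weight k hg (a := 0) |c| (by norm_num))
    intro x
    have : (∑ i ∈ Finset.range N, ‖F i x‖)
        = ‖g x‖ * Real.exp (-(x + k) ^ 2 / 4) *
          ∑ i ∈ Finset.range N, (|c| * |x|) ^ i / (i.factorial : ℝ) := by
      rw [Finset.mul_sum]
      exact Finset.sum_congr rfl fun i _ => hFnorm i x
    show (∑ i ∈ Finset.range N, ‖F i x‖)
        ≤ ‖g x‖ * Real.exp ((0:ℝ) * x ^ 2 + |c| * |x| - (x + k) ^ 2 / 4)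
    rw [this, hWsplit x]
    calc ‖g x‖ * Real.exp (-(x + k) ^ 2 / 4) *
          ∑ i ∈ Finset.range N, (|c| * |x|) ^ i / (i.factorial : ℝ)
        ≤ ‖g x‖ * Real.exp (-(x + k) ^ 2 / 4) * Real.exp (|c| * |x|) := by
          apply mul_le_mul_of_nonneg_left _ (by positivity)
          exact Real.sum_le_exp_of_nonneg (by positivity) N
      _ = ‖g x‖ * (Real.exp (-(x + k) ^ 2 / 4) * Real.exp (|c| * |x|)) := by ring
  have hFeval : ∀ m : ℕ, (∫ x : ℝ, F m x) = 0 := by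
    intro m
    have heq : ∀ x : ℝ, F m x = (((c : ℂ) * Complex.I) ^ m / (m.factorial : ℂ)) *
        (g x * (x : ℂ) ^ m * ((Real.exp (-(x + k) ^ 2 / 4) : ℝ) : ℂ)) := by
      intro x
      rw [hF]
      simp only
      rw [mul_pow]
      ring
    rw [MeasureTheory.integral_congr_ae (Filter.Eventually.of_forall heq),
      integral_const_mul, mom m, mul_zero]
  have hts : HasSum (fun m => ∫ x, F m x) (∫ x : ℝ, ∑' m : ℕ, F m x) :=
    hasSum_integral_of_summable_integral_norm hFint hFsummable
  simp_rw [hFeval] at hts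
  have hint0 : (∫ x : ℝ, ∑' m : ℕ, F m x) = 0 := (hasSum_zero.unique hts).symm
  rw [← hint0]
  apply integral_congr_ae
  filter_upwards with x
  have : ∑' m : ℕ, F m x = g x * ((Real.exp (-(x + k) ^ 2 / 4) : ℝ) : ℂ) *
      ∑' m : ℕ, ((c : ℂ) * Complex.I * (x : ℂ)) ^ m / (m.factorial : ℂ) := by
    rw [hF]
    simp only
    exact tsum_mul_left
  have hexp : ∑' (m : ℕ), ((c : ℂ) * Complex.I * (x : ℂ)) ^ m / (m.factorial : ℂ)
      = Complex.exp ((c : ℂ) * Complex.I * (x : ℂ)) := by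
    rw [Complex.exp_eq_exp_ℂ, NormedSpace.exp_eq_tsum_div]
  rw [this, hexp]


/-- A smooth compactly supported real function, coerced to `ℂ`, as a Schwartz map. -/
def toSchwartz (ρ : ℝ → ℝ) (hρ : ContDiff ℝ ∞ ρ) (hsupp : HasCompactSupport ρ) :
    SchwartzMap ℝ ℂ where
  toFun := fun x => (ρ x : ℂ)
  smooth' := Complex.ofRealCLM.contDiff.comp hρ
  decay' := by
    intro j n
    have hsm : ContDiff ℝ ∞ fun x : ℝ => (ρ x : ℂ) := Complex.ofRealCLM.contDiff.comp hρ
    have hcs : HasCompactSupport fun x : ℝ => (ρ x : ℂ) :=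
      hsupp.comp_left (g := fun r : ℝ => (r : ℂ)) (by simp)
    have hcs' : HasCompactSupport
        fun x : ℝ => ‖x‖ ^ j * ‖iteratedFDeriv ℝ n (fun y : ℝ => (ρ y : ℂ)) x‖ := by
      exact HasCompactSupport.mul_left ((hcs.iteratedFDeriv n).norm)
    have hcont : Continuous
        fun x : ℝ => ‖x‖ ^ j * ‖iteratedFDeriv ℝ n (fun y : ℝ => (ρ y : ℂ)) x‖ :=
      (continuous_norm.pow j).mul (hsm.continuous_iteratedFDeriv (by exact_mod_cast le_top)).norm
    obtain ⟨C, hC⟩ := hcont.bounded_above_of_compact_support hcs'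
    refine ⟨C, fun x => ?_⟩
    have h3 := hC x
    rwa [Real.norm_eq_abs, abs_of_nonneg (by positivity)] at h3

@[simp] lemma toSchwartz_apply (ρ : ℝ → ℝ) (hρ : ContDiff ℝ ∞ ρ) (hs : HasCompactSupport ρ)
    (x : ℝ) : toSchwartz ρ hρ hs x = (ρ x : ℂ) := rfl

lemma ae_zero_of_fourier_zero {u : ℝ → ℂ} (hu : Integrable u (volume : Measure ℝ))
    (hf : ∀ ξ : ℝ, 𝓕 u ξ = 0) : u =ᵐ[volume] 0 := by
  apply ae_eq_zero_of_integral_contDiff_smul_eq_zero hu.locallyIntegrable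
  intro ρ hρ hsupp
  set φ : SchwartzMap ℝ ℂ := toSchwartz ρ hρ hsupp with hφ
  set ψ : SchwartzMap ℝ ℂ := 𝓕⁻ φ with hψ
  have hψF : 𝓕 (⇑ψ) = ⇑φ := by
    have h1 : 𝓕 (𝓕⁻ φ) = φ := FourierInvPair.fourier_fourierInv_eq φ
    have h2 : ⇑(𝓕 ψ : SchwartzMap ℝ ℂ) = 𝓕 ⇑ψ := by
      rw [SchwartzMap.fourier_coe]
    rw [← h2]
    exact congrArg _ h1
  have hflip : (innerₗ ℝ).flip = innerₗ ℝ := by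
    apply LinearMap.ext; intro a; apply LinearMap.ext; intro b
    simp [real_inner_comm]
  have hmul := VectorFourier.integral_fourierIntegral_smul_eq_flip
    (L := innerₗ ℝ) (μ := (volume : Measure ℝ)) (ν := (volume : Measure ℝ))
    Real.continuous_fourierChar (by exact continuous_inner) hu ψ.integrable
  rw [hflip] at hmul
  have hLHS : (∫ ξ : ℝ, (VectorFourier.fourierIntegral Real.fourierChar volume (innerₗ ℝ) u ξ)
      • ψ ξ) = 0 := by
    have : ∀ ξ : ℝ, (VectorFourier.fourierIntegral Real.fourierChar volume (innerₗ ℝ) u ξ)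
        • ψ ξ = 0 := by
      intro ξ
      have : VectorFourier.fourierIntegral Real.fourierChar volume (innerₗ ℝ) u ξ
          = 𝓕 u ξ := rfl
      rw [this, hf ξ, zero_smul]
    rw [MeasureTheory.integral_congr_ae (Filter.Eventually.of_forall this), integral_zero]
  rw [hLHS] at hmul
  have hRHS : (∫ x : ℝ, u x • (VectorFourier.fourierIntegral Real.fourierChar volume
      (innerₗ ℝ) ψ x)) = ∫ x : ℝ, (ρ x : ℂ) * u x := by
    apply integral_congr_ae
    filter_upwards with x
    have : VectorFourier.fourierIntegral Real.fourierChar volume (innerₗ ℝ) (⇑ψ) x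
        = 𝓕 (⇑ψ) x := rfl
    rw [this, hψF, hφ]
    simp [smul_eq_mul, mul_comm]
  rw [hRHS] at hmul
  have : ∀ x : ℝ, ρ x • u x = (ρ x : ℂ) * u x := by
    intro x
    rw [Complex.real_smul]
  rw [MeasureTheory.integral_congr_ae (Filter.Eventually.of_forall this), ← hmul]


lemma hermite_complete (k : ℝ) (g : ℝ → ℂ) (hg : MemLp g 2 (volume : Measure ℝ))
    (h : ∀ n : ℕ, (∫ x : ℝ, g x * ((physHermite n ((x + k) / Real.sqrt 2) : ℝ) : ℂ) *
        Complex.exp (-((x : ℂ) + (k : ℂ)) ^ 2 / 4)) = 0) :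
    g =ᵐ[volume] 0 := by
  have mom := moments_zero k g hg h (momInt k g hg)
  set u : ℝ → ℂ := fun x => g x * ((Real.exp (-(x + k) ^ 2 / 4) : ℝ) : ℂ) with hu
  have huI : Integrable u := by
    refine (int_mul_weight k hg (a := 0) 0 (by norm_num)).mono' ?_ ?_
    · exact hg.aestronglyMeasurable.mul
        (Complex.continuous_ofReal.comp (by continuity)).aestronglyMeasurable
    · filter_upwards with x
      have he : (0 : ℝ) * x ^ 2 + 0 * |x| - (x + k) ^ 2 / 4 = -(x + k) ^ 2 / 4 := by ring
      rw [hu]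
      simp only [norm_mul, Complex.norm_real, Real.norm_eq_abs, Real.abs_exp, he]
      exact le_refl _
  have hfour : ∀ ξ : ℝ, 𝓕 u ξ = 0 := by
    intro ξ
    rw [Real.fourier_real_eq_integral_exp_smul]
    have heq : ∀ v : ℝ, Complex.exp (↑(-2 * Real.pi * v * ξ) * Complex.I) • u v
        = g v * ((Real.exp (-(v + k) ^ 2 / 4) : ℝ) : ℂ) *
          Complex.exp (((-2 * Real.pi * ξ : ℝ) : ℂ) * Complex.I * (v : ℂ)) := by
      intro v
      have harg : ((-2 * Real.pi * v * ξ : ℝ) : ℂ) * Complex.I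
          = ((-2 * Real.pi * ξ : ℝ) : ℂ) * Complex.I * (v : ℂ) := by
        push_cast
        ring
      rw [smul_eq_mul, harg, hu]
      ring
    rw [MeasureTheory.integral_congr_ae (Filter.Eventually.of_forall heq)]
    exact myFourierZero k g hg mom (-2 * Real.pi * ξ)
  have hu0 := ae_zero_of_fourier_zero huI hfour
  filter_upwards [hu0] with x hx
  rw [hu] at hx
  simp only [Pi.zero_apply] at hx ⊢
  have hne : ((Real.exp (-(x + k) ^ 2 / 4) : ℝ) : ℂ) ≠ 0 :=
    Complex.ofReal_ne_zero.mpr (Real.exp_ne_zero _)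
  exact (mul_eq_zero.mp hx).resolve_right hne


lemma complete_of_rho (k : ℝ) (s : ℝ → ℂ) (N : ℂ) (hNne : N ≠ 0) (hscont : Continuous s)
    (f : ℝ → ℂ) (hfm : AEStronglyMeasurable f (volume : Measure ℝ))
    (hfA : MemLp (fun x => f x * rhoA k s N x) 2 (volume : Measure ℝ))
    (h : ∀ n : ℕ, (∫ x : ℝ, (starRingEnd ℂ) (f x) * pbPhiExpl k s N n x) = 0) :
    f =ᵐ[volume] 0 := by
  have hρcont : Continuous (rhoA k s N) := by
    unfold rhoA
    fun_prop
  set g : ℝ → ℂ := fun x => (starRingEnd ℂ) (f x) * rhoA k s N x with hgdef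
  have hgm : AEStronglyMeasurable g (volume : Measure ℝ) :=
    (Complex.continuous_conj.comp_aestronglyMeasurable hfm).mul hρcont.aestronglyMeasurable
  have hgmem : MemLp g 2 (volume : Measure ℝ) := by
    refine hfA.of_le hgm ?_
    filter_upwards with x
    rw [hgdef]
    simp only [norm_mul, RCLike.norm_conj]
    exact le_refl _
  have hkey : ∀ n : ℕ, (∫ x : ℝ, g x * ((physHermite n ((x + k) / Real.sqrt 2) : ℝ) : ℂ) *
      Complex.exp (-((x : ℂ) + (k : ℂ)) ^ 2 / 4)) = 0 := by
    intro n
    have hsq : ((Real.sqrt ((2 : ℝ) ^ n * n.factorial) : ℝ) : ℂ) ≠ 0 := by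
      have h1 : (0 : ℝ) < Real.sqrt ((2 : ℝ) ^ n * n.factorial) := by
        apply Real.sqrt_pos.mpr; positivity
      exact_mod_cast h1.ne'
    have hc : ∀ x : ℝ, g x * ((physHermite n ((x + k) / Real.sqrt 2) : ℝ) : ℂ) *
        Complex.exp (-((x : ℂ) + (k : ℂ)) ^ 2 / 4)
        = ((((2 * Real.pi) ^ ((1 : ℝ) / 4) : ℝ) : ℂ) *
            ((Real.sqrt ((2 : ℝ) ^ n * n.factorial) : ℝ) : ℂ)) *
          ((starRingEnd ℂ) (f x) * pbPhiExpl k s N n x) := by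
      intro x
      rw [hgdef]
      unfold rhoA pbPhiExpl
      have hw : Complex.exp (-((x : ℂ) + (k : ℂ)) ^ 2 / 4)
          = (Complex.exp (((x : ℂ) + (k : ℂ)) ^ 2 / 4))⁻¹ := by
        rw [← Complex.exp_neg]
        congr 1
        ring
      rw [hw]
      set Dc : ℂ := ((Real.sqrt ((2 : ℝ) ^ n * n.factorial) : ℝ) : ℂ) with hDc
      field_simp
    rw [MeasureTheory.integral_congr_ae (Filter.Eventually.of_forall hc), integral_const_mul,
      h n, mul_zero]
  have hg0 := hermite_complete k g hgmem hkey
  have hρne : ∀ x : ℝ, rhoA k s N x ≠ 0 := by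
    intro x
    unfold rhoA
    apply mul_ne_zero
    apply mul_ne_zero
    apply mul_ne_zero hNne
    · exact_mod_cast (Real.rpow_pos_of_pos (by positivity) _).ne'
    · exact Complex.exp_ne_zero _
    · exact Complex.exp_ne_zero _
  filter_upwards [hg0] with x hx
  rw [hgdef] at hx
  simp only [Pi.zero_apply] at hx ⊢
  have := (mul_eq_zero.mp hx).resolve_right (hρne x)
  simpa using this


theorem stmt12 (k : ℝ) (wA wB sA sB : ℝ → ℂ) (Nφ NΨ : ℂ)
    (hwA : ContDiff ℝ (⊤ : ℕ∞) wA) (hwB : ContDiff ℝ (⊤ : ℕ∞) wB)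
    (hsum : ∀ x : ℝ, wA x + wB x = (x : ℂ) + (k : ℂ))
    (hsA : ∀ x : ℝ, HasDerivAt sA (wA x) x)
    (hsB : ∀ x : ℝ, HasDerivAt sB (wB x) x)
    (hnorm : ∀ x : ℝ, sA x + sB x = (x : ℂ) ^ 2 / 2 + (k : ℂ) * (x : ℂ))
    (hN : Nφ * (starRingEnd ℂ) NΨ
      = Complex.exp (-(k : ℂ) ^ 2 / 2) / (Real.sqrt (2 * Real.pi) : ℂ))
    -- f in E:
    (f : ℝ → ℂ)
    (hf : MemLp f 2 (volume : Measure ℝ))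
    (hfA : MemLp (fun x => f x * rhoA k sA Nφ x) 2 (volume : Measure ℝ))
    (hfB : MemLp (fun x => f x * rhoB k sB NΨ x) 2 (volume : Measure ℝ)) :
    ((∀ n : ℕ, (∫ x : ℝ, (starRingEnd ℂ) (f x) * pbPhiExpl k sA Nφ n x) = 0) →
      f =ᵐ[volume] 0) ∧
    ((∀ n : ℕ, (∫ x : ℝ, (starRingEnd ℂ) (f x) * pbPsiExpl k sB NΨ n x) = 0) →
      f =ᵐ[volume] 0) := by
  have hNne : Nφ * (starRingEnd ℂ) NΨ ≠ 0 := by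
    rw [hN]
    apply div_ne_zero (Complex.exp_ne_zero _)
    have : (0 : ℝ) < Real.sqrt (2 * Real.pi) := Real.sqrt_pos.mpr (by positivity)
    exact_mod_cast this.ne'
  have hNφ : Nφ ≠ 0 := fun hz => hNne (by rw [hz, zero_mul])
  have hNΨ : NΨ ≠ 0 := by
    intro hz
    apply hNne
    rw [hz]
    simp
  have hsAcont : Continuous sA := by
    have : Differentiable ℝ sA := fun x => (hsA x).differentiableAt
    exact this.continuous
  have hsBcont : Continuous sB := by
    have : Differentiable ℝ sB := fun x => (hsB x).differentiableAt
    exact this.continuous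
  constructor
  · intro hint
    exact complete_of_rho k sA Nφ hNφ hsAcont f hf.aestronglyMeasurable hfA hint
  · intro hint
    have hconj : Continuous fun x => (starRingEnd ℂ) (sB x) :=
      Complex.continuous_conj.comp hsBcont
    exact complete_of_rho k (fun x => (starRingEnd ℂ) (sB x)) NΨ hNΨ hconj f
      hf.aestronglyMeasurable hfB hint

end
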